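/- arXiv:2110.00554 — 2 statements merged into one kernel-verified Lean document; each statement's English description precedes it below -/
import Mathlib

section
/- Let u_IC : ℝ → ℝ be continuously differentiable and suppose there exists ξ₀ ∈ ℝ with u_IC'(ξ₀) = m < 0. If u : ℝ × [0,T] → ℝ is a continuously differentiable solution of the inviscid Burgers' equation ∂u/∂t + u ∂u/∂x = 0 with u(x,0) = u_IC(x), then T < −1/m. In particular, no classical (C¹) solution exists on any time interval reaching or exceeding the breaking time t_b = −1/(min_x u_IC'(x)). -/
/-!
Along each characteristic line `x = ξ + t u(ξ,0)` the defect `u(x,t) - u(ξ,0)` solves a linear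
ODE with bounded coefficient `-∂ₓu` and vanishes at `t = 0`, so by Grönwall `u` is constant along
characteristics. At `t₀ = -1/m` the map `Φ ξ = ξ + t₀ u_IC(ξ)` has zero derivative at `ξ₀`, so
differentiating `u(Φ ξ, t₀) = u_IC(ξ)` at `ξ₀` would give `u_IC'(ξ₀) = 0 ≠ m`. Hence a classical
solution cannot reach `t₀`.
-/

open Set Function

variable {F : Type*} [NormedAddCommGroup F] [NormedSpace ℝ F]

section Slices

variable {f : ℝ × ℝ → F} {f' : ℝ × ℝ →L[ℝ] F} {I : Set ℝ}

theorem HasFDerivWithinAt.hasDerivAt_slice_fst {x t : ℝ}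
    (hf : HasFDerivWithinAt f f' (univ ×ˢ I) (x, t)) (ht : t ∈ I) :
    HasDerivAt (fun y => f (y, t)) (f' (1, 0)) x := by
  rw [← hasDerivWithinAt_univ]
  have hline : HasDerivAt (fun y : ℝ => (y, t)) (1, 0) x :=
    (hasDerivAt_id' x).prodMk (hasDerivAt_const x t)
  exact hf.comp_hasDerivWithinAt x hline.hasDerivWithinAt fun _ _ => mk_mem_prod (mem_univ _) ht

theorem HasFDerivWithinAt.hasDerivWithinAt_slice_snd {x t : ℝ}
    (hf : HasFDerivWithinAt f f' (univ ×ˢ I) (x, t)) :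
    HasDerivWithinAt (fun s => f (x, s)) (f' (0, 1)) I t := by
  have hline : HasDerivAt (fun s : ℝ => (x, s)) (0, 1) t :=
    (hasDerivAt_const t x).prodMk (hasDerivAt_id' t)
  exact hf.comp_hasDerivWithinAt t hline.hasDerivWithinAt fun _ hs => mk_mem_prod (mem_univ _) hs

theorem HasFDerivWithinAt.hasDerivWithinAt_line {ξ c t : ℝ}
    (hf : HasFDerivWithinAt f f' (univ ×ˢ I) (ξ + t * c, t)) :
    HasDerivWithinAt (fun s => f (ξ + s * c, s)) (f' (c, 1)) I t := by
  have hline : HasDerivAt (fun s : ℝ => (ξ + s * c, s)) (c, 1) t :=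
    ((hasDerivAt_mul_const c).const_add ξ).prodMk (hasDerivAt_id' t)
  exact hf.comp_hasDerivWithinAt (f := fun s : ℝ => (ξ + s * c, s)) t hline.hasDerivWithinAt
    fun _ hs => mk_mem_prod (mem_univ _) hs

end Slices

theorem eqOn_zero_of_hasDerivWithinAt_smul_self {g : ℝ → F} {k : ℝ → ℝ} {a b : ℝ}
    (hk : ContinuousOn k (Icc a b)) (hg : ContinuousOn g (Icc a b))
    (hg' : ∀ t ∈ Icc a b, HasDerivWithinAt g (k t • g t) (Icc a b) t) (ha : g a = 0) :
    EqOn g 0 (Icc a b) := by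
  obtain ⟨K, hK⟩ := isCompact_Icc.exists_bound_of_continuousOn hk
  have hg'_right : ∀ t ∈ Ico a b, HasDerivWithinAt g (k t • g t) (Ici t) t := fun t ht =>
    (hg' t (Ico_subset_Icc_self ht)).mono_of_mem_nhdsWithin (Icc_mem_nhdsGE_of_mem ht)
  have hbound : ∀ t ∈ Ico a b, ‖k t • g t‖ ≤ K * ‖g t‖ + 0 := fun t ht => by
    rw [norm_smul, add_zero]
    exact mul_le_mul_of_nonneg_right (hK t (Ico_subset_Icc_self ht)) (norm_nonneg _)
  intro t ht
  have := norm_le_gronwallBound_of_norm_deriv_right_le (δ := 0) hg hg'_right (by simp [ha])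
    hbound t ht
  rwa [gronwallBound_ε0_δ0, norm_le_zero_iff] at this

section Burgers

variable {u : ℝ → ℝ → ℝ} {T : ℝ}

theorem hasDerivWithinAt_burgers_characteristic (hT : 0 < T)
    (hu : ContDiffOn ℝ 1 (uncurry u) (univ ×ˢ Icc 0 T))
    (hpde : ∀ x, ∀ t ∈ Icc (0 : ℝ) T,
      derivWithin (fun s => u x s) (Icc 0 T) t + u x t * deriv (fun y => u y t) x = 0)
    (ξ c : ℝ) {t : ℝ} (ht : t ∈ Icc 0 T) :
    HasDerivWithinAt (fun s => u (ξ + s * c) s - c)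
      (-fderivWithin ℝ (uncurry u) (univ ×ˢ Icc 0 T) (ξ + t * c, t) (1, 0) • (u (ξ + t * c) t - c))
      (Icc 0 T) t := by
  set D := fderivWithin ℝ (uncurry u) (univ ×ˢ Icc 0 T)
  have hD : ∀ x, HasFDerivWithinAt (uncurry u) (D (x, t)) (univ ×ˢ Icc 0 T) (x, t) :=
    fun x => (hu.differentiableOn one_ne_zero _ ⟨mem_univ _, ht⟩).hasFDerivWithinAt
  have hpdeD : ∀ x, D (x, t) (0, 1) + u x t * D (x, t) (1, 0) = 0 := fun x => by
    rw [← ((hD x).hasDerivWithinAt_slice_snd).derivWithin (uniqueDiffOn_Icc hT t ht),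
      ← ((hD x).hasDerivAt_slice_fst ht).deriv]
    exact hpde x t ht
  have hsplit : ((c, 1) : ℝ × ℝ) = c • (1, 0) + (0, 1) := by simp
  refine (((hD (ξ + t * c)).hasDerivWithinAt_line).sub_const c).congr_deriv ?_
  rw [hsplit, map_add, map_smul, smul_eq_mul, smul_eq_mul]
  linear_combination hpdeD (ξ + t * c)

theorem burgers_const_along_characteristic (hT : 0 < T)
    (hu : ContDiffOn ℝ 1 (uncurry u) (univ ×ˢ Icc 0 T))
    (hpde : ∀ x, ∀ t ∈ Icc (0 : ℝ) T,
      derivWithin (fun s => u x s) (Icc 0 T) t + u x t * deriv (fun y => u y t) x = 0)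
    (ξ : ℝ) {t : ℝ} (ht : t ∈ Icc 0 T) :
    u (ξ + t * u ξ 0) t = u ξ 0 := by
  set c := u ξ 0
  have hline : ContinuousOn (fun s : ℝ => (ξ + s * c, s)) (Icc 0 T) := by fun_prop
  have hmaps : MapsTo (fun s : ℝ => (ξ + s * c, s)) (Icc 0 T) (univ ×ˢ Icc 0 T) :=
    fun _ hs => ⟨mem_univ _, hs⟩
  have hk : ContinuousOn
      (fun s => -fderivWithin ℝ (uncurry u) (univ ×ˢ Icc 0 T) (ξ + s * c, s) (1, 0)) (Icc 0 T) :=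
    (((hu.continuousOn_fderivWithin (uniqueDiffOn_univ.prod (uniqueDiffOn_Icc hT)) le_rfl).comp
      hline hmaps).clm_apply continuousOn_const).neg
  have hg : ContinuousOn (fun s => u (ξ + s * c) s - c) (Icc 0 T) :=
    (hu.continuousOn.comp hline hmaps).sub continuousOn_const
  have := eqOn_zero_of_hasDerivWithinAt_smul_self hk hg
    (fun s hs => hasDerivWithinAt_burgers_characteristic hT hu hpde ξ c hs) (by simp [c]) ht
  exact sub_eq_zero.mp this

end Burgers

theorem stmt2_general (u_IC : ℝ → ℝ)
    (ξ₀ m : ℝ) (hξ₀ : deriv u_IC ξ₀ = m) (hm : m < 0)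
    (T : ℝ) (u : ℝ → ℝ → ℝ)
    (hu : ContDiffOn ℝ 1 (fun p : ℝ × ℝ => u p.1 p.2) (univ ×ˢ Icc 0 T))
    (hpde : ∀ (x : ℝ), ∀ t ∈ Icc (0:ℝ) T,
      derivWithin (fun s => u x s) (Icc 0 T) t + u x t * deriv (fun y => u y t) x = 0)
    (hinit : ∀ x : ℝ, u x 0 = u_IC x) :
    T < -1 / m := by
  by_contra! hTm
  set t₀ := -1 / m
  have ht₀ : t₀ ∈ Icc 0 T := ⟨(div_pos_of_neg_of_neg neg_one_lt_zero hm).le, hTm⟩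
  have hT : 0 < T := (div_pos_of_neg_of_neg neg_one_lt_zero hm).trans_le hTm
  have hchar : (fun y => u y t₀) ∘ (fun ξ => ξ + t₀ * u_IC ξ) = u_IC := funext fun ξ => by
    simpa [hinit] using burgers_const_along_characteristic hT hu hpde ξ ht₀
  have hdIC : HasDerivAt u_IC m ξ₀ :=
    hξ₀ ▸ (differentiableAt_of_deriv_ne_zero (hξ₀ ▸ hm.ne)).hasDerivAt
  have hΦ : HasDerivAt (fun ξ => ξ + t₀ * u_IC ξ) 0 ξ₀ :=
    ((hasDerivAt_id' ξ₀).add (hdIC.const_mul t₀)).congr_deriv (by simp [t₀, hm.ne])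
  have hslice : DifferentiableAt ℝ (fun y => u y t₀) (ξ₀ + t₀ * u_IC ξ₀) :=
    ((hu.differentiableOn one_ne_zero _ ⟨mem_univ _, ht₀⟩).hasFDerivWithinAt
      |>.hasDerivAt_slice_fst ht₀).differentiableAt
  have := hslice.hasDerivAt.comp ξ₀ hΦ
  rw [mul_zero, hchar] at this
  exact hm.ne (hξ₀ ▸ this.deriv)

/-- If the initial condition has a point of negative slope `m`, then no classical `C¹`
solution of the inviscid Burgers' equation exists up to (or beyond) the breaking time
`-1/m`: any solution interval `[0,T]` must satisfy `T < -1/m`. -/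
theorem stmt2 (u_IC : ℝ → ℝ) (hIC : ContDiff ℝ 1 u_IC)
    (ξ₀ m : ℝ) (hξ₀ : deriv u_IC ξ₀ = m) (hm : m < 0)
    (T : ℝ) (hT : 0 ≤ T) (u : ℝ → ℝ → ℝ)
    (hu : ContDiffOn ℝ 1 (fun p : ℝ × ℝ => u p.1 p.2) (univ ×ˢ Icc 0 T))
    (hpde : ∀ (x : ℝ), ∀ t ∈ Icc (0:ℝ) T,
      derivWithin (fun s => u x s) (Icc 0 T) t + u x t * deriv (fun y => u y t) x = 0)
    (hinit : ∀ x : ℝ, u x 0 = u_IC x) :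
    T < -1 / m :=
  stmt2_general u_IC ξ₀ m hξ₀ hm T u hu hpde hinit
end

section
/- Let ν > 0, let D ⊆ ℝ × ℝ be open, and let φ : D → ℝ be twice continuously differentiable, strictly positive on D, and satisfy the heat equation ∂φ/∂t = ν ∂²φ/∂x² on D. Then the function u := −2ν (∂φ/∂x)/φ satisfies the viscous Burgers' equation ∂u/∂t + u ∂u/∂x = ν ∂²u/∂x² on D (Hopf–Cole transformation). -/
/-!
Put `ψ = log φ`. Dividing the heat equation by `φ` turns it into the potential form of Burgers'
equation, `ψ_t = ν (ψ_xx + ψ_x²)`, and `u = -2ν ψ_x`. Differentiating the potential equation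
in `x` and using `ψ_xt = ψ_tx` (Schwarz, as `ψ` is `C²`) gives Burgers' equation for `u`.
Only two derivatives of `φ` are assumed, so `ψ_xxx` is not available a priori: it is obtained
by differentiating `ν ψ_xx = ψ_t - ν ψ_x²`, whose right-hand side is `C¹`.
-/

open Function

variable {E : Type*} [NormedAddCommGroup E] [NormedSpace ℝ E]

noncomputable def partialX (f : ℝ → ℝ → E) (x t : ℝ) : E := deriv (fun y => f y t) x

noncomputable def partialT (f : ℝ → ℝ → E) (x t : ℝ) : E := deriv (f x) t

section Slices

variable {f g : ℝ → ℝ → E} {D : Set (ℝ × ℝ)} {x t : ℝ}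

theorem HasFDerivAt.hasDerivAt_slice_fst {f' : ℝ × ℝ →L[ℝ] E}
    (h : HasFDerivAt (uncurry f) f' (x, t)) : HasDerivAt (fun y => f y t) (f' (1, 0)) x :=
  (h.comp_hasDerivAt x ((hasDerivAt_id' x).prodMk (hasDerivAt_const x t)) :)

theorem HasFDerivAt.hasDerivAt_slice_snd {f' : ℝ × ℝ →L[ℝ] E}
    (h : HasFDerivAt (uncurry f) f' (x, t)) : HasDerivAt (f x) (f' (0, 1)) t :=
  h.comp_hasDerivAt t ((hasDerivAt_const t x).prodMk (hasDerivAt_id' t))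

theorem HasFDerivAt.partialX_eq {f' : ℝ × ℝ →L[ℝ] E} (h : HasFDerivAt (uncurry f) f' (x, t)) :
    partialX f x t = f' (1, 0) :=
  h.hasDerivAt_slice_fst.deriv

theorem HasFDerivAt.partialT_eq {f' : ℝ × ℝ →L[ℝ] E} (h : HasFDerivAt (uncurry f) f' (x, t)) :
    partialT f x t = f' (0, 1) :=
  h.hasDerivAt_slice_snd.deriv

theorem ContDiffOn.hasDerivAt_partialX {n : WithTop ℕ∞} (hf : ContDiffOn ℝ n (uncurry f) D)
    (hn : n ≠ 0) (hD : IsOpen D) (hxt : (x, t) ∈ D) :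
    HasDerivAt (fun y => f y t) (partialX f x t) x :=
  ((hf.differentiableOn hn).differentiableAt (hD.mem_nhds hxt)).hasFDerivAt
    |>.hasDerivAt_slice_fst.differentiableAt.hasDerivAt

theorem ContDiffOn.hasDerivAt_partialT {n : WithTop ℕ∞} (hf : ContDiffOn ℝ n (uncurry f) D)
    (hn : n ≠ 0) (hD : IsOpen D) (hxt : (x, t) ∈ D) :
    HasDerivAt (f x) (partialT f x t) t :=
  ((hf.differentiableOn hn).differentiableAt (hD.mem_nhds hxt)).hasFDerivAt
    |>.hasDerivAt_slice_snd.differentiableAt.hasDerivAt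

theorem partialX_congr (h : ∀ x t, (x, t) ∈ D → f x t = g x t) (hD : IsOpen D)
    (hxt : (x, t) ∈ D) : partialX f x t = partialX g x t := by
  refine Filter.EventuallyEq.deriv_eq ?_
  filter_upwards [(Continuous.prodMk_left t).continuousAt.eventually_mem (hD.mem_nhds hxt)]
    with y hy using h y t hy

theorem partialT_congr (h : ∀ x t, (x, t) ∈ D → f x t = g x t) (hD : IsOpen D)
    (hxt : (x, t) ∈ D) : partialT f x t = partialT g x t := by
  refine Filter.EventuallyEq.deriv_eq ?_
  filter_upwards [(Continuous.prodMk_right x).continuousAt.eventually_mem (hD.mem_nhds hxt)]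
    with s hs using h x s hs

theorem DifferentiableOn.partialX_eq_fderiv (hf : DifferentiableOn ℝ (uncurry f) D)
    (hD : IsOpen D) (x t : ℝ) (hxt : (x, t) ∈ D) :
    partialX f x t = fderiv ℝ (uncurry f) (x, t) (1, 0) :=
  (hf.differentiableAt (hD.mem_nhds hxt)).hasFDerivAt.partialX_eq

theorem DifferentiableOn.partialT_eq_fderiv (hf : DifferentiableOn ℝ (uncurry f) D)
    (hD : IsOpen D) (x t : ℝ) (hxt : (x, t) ∈ D) :
    partialT f x t = fderiv ℝ (uncurry f) (x, t) (0, 1) :=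
  (hf.differentiableAt (hD.mem_nhds hxt)).hasFDerivAt.partialT_eq

theorem ContDiffOn.partialX_of_isOpen {n : WithTop ℕ∞} (hf : ContDiffOn ℝ (n + 1) (uncurry f) D)
    (hD : IsOpen D) : ContDiffOn ℝ n (uncurry (partialX f)) D :=
  ((hf.fderiv_of_isOpen hD le_rfl).clm_apply contDiffOn_const).congr fun q hq =>
    (hf.differentiableOn (by simp)).partialX_eq_fderiv hD q.1 q.2 hq

theorem ContDiffOn.partialT_of_isOpen {n : WithTop ℕ∞} (hf : ContDiffOn ℝ (n + 1) (uncurry f) D)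
    (hD : IsOpen D) : ContDiffOn ℝ n (uncurry (partialT f)) D :=
  ((hf.fderiv_of_isOpen hD le_rfl).clm_apply contDiffOn_const).congr fun q hq =>
    (hf.differentiableOn (by simp)).partialT_eq_fderiv hD q.1 q.2 hq

theorem ContDiffOn.partialT_partialX (hf : ContDiffOn ℝ 2 (uncurry f) D) (hD : IsOpen D)
    (hxt : (x, t) ∈ D) : partialT (partialX f) x t = partialX (partialT f) x t := by
  have hF : ContDiffAt ℝ 2 (uncurry f) (x, t) := hf.contDiffAt (hD.mem_nhds hxt)
  have hd : DifferentiableOn ℝ (uncurry f) D := hf.differentiableOn two_ne_zero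
  have hH : ∀ v, HasFDerivAt (uncurry fun x t => fderiv ℝ (uncurry f) (x, t) v)
      ((ContinuousLinearMap.apply ℝ E v).comp (fderiv ℝ (fderiv ℝ (uncurry f)) (x, t))) (x, t) :=
    fun v => (ContinuousLinearMap.apply ℝ E v).hasFDerivAt.comp (x, t)
      ((hF.fderiv_right le_rfl).differentiableAt one_ne_zero).hasFDerivAt
  rw [partialT_congr (hd.partialX_eq_fderiv hD) hD hxt,
    partialX_congr (hd.partialT_eq_fderiv hD) hD hxt, (hH _).partialT_eq, (hH _).partialX_eq]
  exact hF.isSymmSndFDerivAt (by simp) _ _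

end Slices

section Scalar

variable {f u ψ : ℝ → ℝ → ℝ} {D : Set (ℝ × ℝ)} {ν x t : ℝ}

theorem partialX_const_mul (c : ℝ) (f : ℝ → ℝ → ℝ) :
    partialX (fun x t => c * f x t) = fun x t => c * partialX f x t := by
  ext x t
  exact deriv_const_mul_field c

theorem partialT_const_mul (c : ℝ) (f : ℝ → ℝ → ℝ) :
    partialT (fun x t => c * f x t) = fun x t => c * partialT f x t := by
  ext x t
  exact deriv_const_mul_field c

theorem partialX_log (hf : DifferentiableOn ℝ (uncurry f) D) (hD : IsOpen D)
    (hne : ∀ q ∈ D, f q.1 q.2 ≠ 0) (x t : ℝ) (hxt : (x, t) ∈ D) :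
    partialX (fun x t => Real.log (f x t)) x t = partialX f x t / f x t :=
  deriv.log ((hf.differentiableAt (hD.mem_nhds hxt)).hasFDerivAt.hasDerivAt_slice_fst
    |>.differentiableAt) (hne _ hxt)

theorem partialT_log_of_heat (hf : ContDiffOn ℝ 2 (uncurry f) D) (hD : IsOpen D)
    (hne : ∀ q ∈ D, f q.1 q.2 ≠ 0)
    (hheat : ∀ x t, (x, t) ∈ D → partialT f x t = ν * partialX (partialX f) x t)
    (x t : ℝ) (hxt : (x, t) ∈ D) :
    partialT (fun x t => Real.log (f x t)) x t = ν * (partialX (partialX fun x t =>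
      Real.log (f x t)) x t + partialX (fun x t => Real.log (f x t)) x t ^ 2) := by
  have hfx : ContDiffOn ℝ 1 (uncurry (partialX f)) D := hf.partialX_of_isOpen hD
  have hlog := partialX_log (hf.differentiableOn two_ne_zero) hD hne
  have hf0 : f x t ≠ 0 := hne _ hxt
  have hlogt : partialT (fun x t => Real.log (f x t)) x t = partialT f x t / f x t :=
    deriv.log (hf.hasDerivAt_partialT two_ne_zero hD hxt).differentiableAt hf0
  have hlogxx : partialX (partialX fun x t => Real.log (f x t)) x t
      = (partialX (partialX f) x t * f x t - partialX f x t ^ 2) / f x t ^ 2 := by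
    rw [partialX_congr hlog hD hxt]
    refine ((hfx.hasDerivAt_partialX one_ne_zero hD hxt).fun_div
      (hf.hasDerivAt_partialX two_ne_zero hD hxt) hf0).deriv.trans ?_
    ring
  rw [hlogt, hlogxx, hlog x t hxt, hheat x t hxt]
  field_simp
  ring

theorem burgers_of_potential_burgers (hψ : ContDiffOn ℝ 2 (uncurry ψ) D) (hD : IsOpen D)
    (hpot : ∀ x t, (x, t) ∈ D →
      partialT ψ x t = ν * (partialX (partialX ψ) x t + partialX ψ x t ^ 2))
    (hu : ∀ x t, (x, t) ∈ D → u x t = -2 * ν * partialX ψ x t) (hxt : (x, t) ∈ D) :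
    partialT u x t + u x t * partialX u x t = ν * partialX (partialX u) x t := by
  have hψx : ContDiffOn ℝ 1 (uncurry (partialX ψ)) D := hψ.partialX_of_isOpen hD
  have hψt : ContDiffOn ℝ 1 (uncurry (partialT ψ)) D := hψ.partialT_of_isOpen hD
  have hux : ∀ x t, (x, t) ∈ D → partialX u x t = -2 * ν * partialX (partialX ψ) x t :=
    fun x t h => by rw [partialX_congr hu hD h, partialX_const_mul]
  have hψxx : ∀ x t, (x, t) ∈ D →
      ν * partialX (partialX ψ) x t = partialT ψ x t - ν * partialX ψ x t ^ 2 := fun x t h => by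
    rw [hpot x t h]
    ring
  have hψxxx : ν * partialX (partialX (partialX ψ)) x t = partialX (partialT ψ) x t
      - 2 * ν * partialX ψ x t * partialX (partialX ψ) x t :=
    calc ν * partialX (partialX (partialX ψ)) x t
        = partialX (fun x t => ν * partialX (partialX ψ) x t) x t := by rw [partialX_const_mul]
      _ = partialX (fun x t => partialT ψ x t - ν * partialX ψ x t ^ 2) x t :=
          partialX_congr hψxx hD hxt
      _ = _ := ((hψt.hasDerivAt_partialX one_ne_zero hD hxt).fun_sub
          ((hψx.hasDerivAt_partialX one_ne_zero hD hxt).fun_pow 2 |>.const_mul ν)).deriv.trans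
            (by ring)
  rw [partialT_congr hu hD hxt, partialX_congr hux hD hxt, hu x t hxt, hux x t hxt]
  simp only [partialT_const_mul, partialX_const_mul, hψ.partialT_partialX hD hxt]
  linear_combination 2 * ν * hψxxx

end Scalar

theorem stmt7_general (ν : ℝ) (D : Set (ℝ × ℝ)) (hD : IsOpen D)
    (φ : ℝ → ℝ → ℝ)
    (hφ : ContDiffOn ℝ 2 (fun p : ℝ × ℝ => φ p.1 p.2) D)
    (hpos : ∀ p ∈ D, 0 < φ p.1 p.2)
    (hheat : ∀ p ∈ D,
      deriv (fun s => φ p.1 s) p.2 = ν * deriv (deriv (fun y => φ y p.2)) p.1)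
    (u : ℝ → ℝ → ℝ)
    (hu : ∀ x t, u x t = -2 * ν * deriv (fun y => φ y t) x / φ x t) :
    ∀ p ∈ D,
      deriv (fun s => u p.1 s) p.2 + u p.1 p.2 * deriv (fun y => u y p.2) p.1
        = ν * deriv (deriv (fun y => u y p.2)) p.1 := by
  intro p hp
  have hne : ∀ q ∈ D, φ q.1 q.2 ≠ 0 := fun q hq => (hpos q hq).ne'
  have hlog := partialX_log (hφ.differentiableOn two_ne_zero) hD hne
  refine burgers_of_potential_burgers (ψ := fun x t => Real.log (φ x t)) (u := u) (hφ.log hne) hD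
    (partialT_log_of_heat hφ hD hne fun x t h => hheat (x, t) h) (fun x t h => ?_) hp
  rw [hu, mul_div_assoc, hlog x t h]
  rfl

/-- Hopf–Cole transformation: if `φ` is positive and solves the heat equation
`φ_t = ν φ_xx` on an open set `D`, then `u = −2ν φ_x/φ` solves the viscous Burgers'
equation `u_t + u u_x = ν u_xx` on `D`. -/
theorem stmt7 (ν : ℝ) (hν : 0 < ν) (D : Set (ℝ × ℝ)) (hD : IsOpen D)
    (φ : ℝ → ℝ → ℝ)
    (hφ : ContDiffOn ℝ 2 (fun p : ℝ × ℝ => φ p.1 p.2) D)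
    (hpos : ∀ p ∈ D, 0 < φ p.1 p.2)
    (hheat : ∀ p ∈ D,
      deriv (fun s => φ p.1 s) p.2 = ν * deriv (deriv (fun y => φ y p.2)) p.1)
    (u : ℝ → ℝ → ℝ)
    (hu : ∀ x t, u x t = -2 * ν * deriv (fun y => φ y t) x / φ x t) :
    ∀ p ∈ D,
      deriv (fun s => u p.1 s) p.2 + u p.1 p.2 * deriv (fun y => u y p.2) p.1
        = ν * deriv (deriv (fun y => u y p.2)) p.1 :=
  stmt7_general ν D hD φ hφ hpos hheat u hu
end
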